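/- In a configuration whose points on a given circle C centered at c form a set invariant under rotation by 2π/m about c (m ≥ 2), moving strictly fewer than m of these points off the circle (all the moved points forming an orbit of a rotation of order m' where m' properly divides m) yields a point set on C whose rotational symmetry order about c divides m. -/

import Mathlib

open scoped Classical

/-- Rotation about `c` by angle `θ` in the complex plane. -/
noncomputable def rot (c : ℂ) (θ : ℝ) (z : ℂ) : ℂ :=
  c + Complex.exp (↑θ * Complex.I) * (z - c)

lemma rot_injective (c : ℂ) (θ : ℝ) : Function.Injective (rot c θ) := by
  intro a b h
  simp only [rot] at h
  have h2 : Complex.exp (↑θ * Complex.I) * (a - c) = Complex.exp (↑θ * Complex.I) * (b - c) :=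
    add_left_cancel h
  have h3 : a - c = b - c := mul_left_cancel₀ (Complex.exp_ne_zero _) h2
  exact sub_left_inj.1 h3

lemma mem_iff_of_image_eq {f : ℂ → ℂ} (hf : Function.Injective f) {A : Finset ℂ}
    (h : A.image f = A) (z : ℂ) : z ∈ A ↔ f z ∈ A := by
  constructor
  · intro hz; rw [← h]; exact Finset.mem_image_of_mem f hz
  · intro hz
    rw [← h] at hz
    obtain ⟨w, hw, hfw⟩ := Finset.mem_image.1 hz
    rwa [hf hfw] at hw

lemma rot_iterate (c : ℂ) (θ : ℝ) (z : ℂ) (i : ℕ) :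
    (rot c θ)^[i] z = c + Complex.exp (↑θ * Complex.I) ^ i * (z - c) := by
  induction i with
  | zero => simp
  | succ n ih =>
      rw [Function.iterate_succ_apply', ih, rot]
      ring


/-- Deleting from a set `S` on a circle, invariant under rotation by `2π/m` (`m ≥ 2`),
an orbit of a rotation of order `m'` properly dividing `m` (so strictly fewer than `m`
points) yields a set whose rotational symmetry order about the center divides `m`. -/
theorem stmt_14 (c : ℂ) (rC : ℝ) (hrC : 0 < rC) (m m' : ℕ) (hm : 2 ≤ m)
    (hm' : m' ∣ m) (hm'lt : m' < m)
    (S : Finset ℂ) (hScirc : ∀ z ∈ S, ‖z - c‖ = rC)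
    (hSinv : Finset.image (rot c (2 * Real.pi / (m : ℝ))) S = S)
    (z₀ : ℂ) (hz₀ : z₀ ∈ S)
    (O : Finset ℂ)
    (hO : O = Finset.image (fun i => (rot c (2 * Real.pi / (m' : ℝ)))^[i] z₀)
      (Finset.range m'))
    (hOcard : O.card < m)
    (T : Finset ℂ) (hT : T = S \ O)
    (k : ℕ) (hk1 : 1 ≤ k)
    (hkinv : Finset.image (rot c (2 * Real.pi / (k : ℝ))) T = T)
    (hkmax : ∀ k', 1 ≤ k' → Finset.image (rot c (2 * Real.pi / (k' : ℝ))) T = T → k' ≤ k) :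
    k ∣ m := by
  -- basic positivity
  have hm'pos : 0 < m' := by
    rcases Nat.eq_zero_or_pos m' with h | h
    · subst h; rw [zero_dvd_iff] at hm'; omega
    · exact h
  have hkpos : 0 < k := hk1
  have hmpos : 0 < m := by omega
  obtain ⟨l, hl⟩ : ∃ l, l = Nat.lcm k m := ⟨_, rfl⟩
  have hkl : k ∣ l := by rw [hl]; exact Nat.dvd_lcm_left k m
  have hml : m ∣ l := by rw [hl]; exact Nat.dvd_lcm_right k m
  have hm'l : m' ∣ l := hm'.trans hml
  have hlpos : 0 < l := by
    rw [hl]; exact Nat.pos_of_ne_zero (Nat.lcm_ne_zero (by omega) (by omega))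
  haveI : NeZero l := ⟨by omega⟩
  set u := l / k with hu
  set v := l / m with hv
  have huk : u * k = l := Nat.div_mul_cancel hkl
  have hvm : v * m = l := Nat.div_mul_cancel hml
  have hw'm' : (l / m') * m' = l := Nat.div_mul_cancel hm'l
  -- the primitive root
  set ζ : ℂ := Complex.exp (2 * ↑Real.pi * Complex.I / ↑l) with hζdef
  have hζ : IsPrimitiveRoot ζ l := Complex.isPrimitiveRoot_exp l (by omega)
  have hz0c : z₀ - c ≠ 0 := by
    intro h
    have h2 := hScirc z₀ hz₀
    rw [h] at h2
    simp at h2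
    linarith
  -- exp identity
  have hexp : ∀ n : ℕ, 0 < n → n ∣ l →
      Complex.exp (↑(2 * Real.pi / (n : ℝ)) * Complex.I) = ζ ^ (l / n) := by
    intro n hn hnl
    rw [hζdef, ← Complex.exp_nat_mul]
    congr 1
    have hc : ((l / n : ℕ) : ℂ) * (n : ℂ) = (l : ℂ) := by
      exact_mod_cast congrArg (Nat.cast : ℕ → ℂ) (Nat.div_mul_cancel hnl)
    have hn0 : (n : ℂ) ≠ 0 := Nat.cast_ne_zero.2 (by omega)
    have hl0 : (l : ℂ) ≠ 0 := Nat.cast_ne_zero.2 (by omega)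
    push_cast
    field_simp
    linear_combination -hc
  -- powers mod l
  have hpowmod : ∀ a : ℕ, ζ ^ a = ζ ^ (a % l) := by
    intro a
    conv_lhs => rw [← Nat.mod_add_div a l]
    rw [pow_add, pow_mul, hζ.pow_eq_one, one_pow, mul_one]
  have hwper : ∀ a b : ℕ, a % l = b % l → ζ ^ a = ζ ^ b := by
    intro a b h
    rw [hpowmod, h, ← hpowmod]
  have hptinj : ∀ a b : ℕ, c + ζ ^ a * (z₀ - c) = c + ζ ^ b * (z₀ - c) → a % l = b % l := by
    intro a b hab
    have h1 : ζ ^ a = ζ ^ b := mul_right_cancel₀ hz0c (add_left_cancel hab)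
    have h2 : ζ ^ (a % l) = ζ ^ (b % l) := by rw [← hpowmod, ← hpowmod]; exact h1
    exact hζ.pow_inj (Nat.mod_lt _ hlpos) (Nat.mod_lt _ hlpos) h2
  -- membership characterizations
  have hSmem : ∀ z, z ∈ S ↔ c + ζ ^ v * (z - c) ∈ S := by
    intro z
    have h := mem_iff_of_image_eq (rot_injective c (2 * Real.pi / m)) hSinv z
    rw [h]; unfold rot; rw [hexp m hmpos hml]
  have hTmem : ∀ z, z ∈ T ↔ c + ζ ^ u * (z - c) ∈ T := by
    intro z
    have h := mem_iff_of_image_eq (rot_injective c (2 * Real.pi / k)) hkinv z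
    rw [h]; unfold rot; rw [hexp k hkpos hkl]
  have hOmem : ∀ z, z ∈ O ↔ ∃ i, i < m' ∧ z = c + ζ ^ ((l / m') * i) * (z₀ - c) := by
    intro z
    rw [hO, Finset.mem_image]
    constructor
    · rintro ⟨i, hi, rfl⟩
      refine ⟨i, Finset.mem_range.1 hi, ?_⟩
      rw [rot_iterate, hexp m' hm'pos hm'l, ← pow_mul]
    · rintro ⟨i, hi, rfl⟩
      exact ⟨i, Finset.mem_range.2 hi, by rw [rot_iterate, hexp m' hm'pos hm'l, ← pow_mul]⟩
  -- step lemmas for points w j = c + ζ^j (z₀-c)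
  have hwS : ∀ j : ℕ, c + ζ ^ j * (z₀ - c) ∈ S ↔ c + ζ ^ (j + v) * (z₀ - c) ∈ S := by
    intro j
    rw [hSmem (c + ζ ^ j * (z₀ - c))]
    have e : c + ζ ^ v * ((c + ζ ^ j * (z₀ - c)) - c) = c + ζ ^ (j + v) * (z₀ - c) := by
      rw [pow_add]; ring
    rw [e]
  have hwT : ∀ j : ℕ, c + ζ ^ j * (z₀ - c) ∈ T ↔ c + ζ ^ (j + u) * (z₀ - c) ∈ T := by
    intro j
    rw [hTmem (c + ζ ^ j * (z₀ - c))]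
    have e : c + ζ ^ u * ((c + ζ ^ j * (z₀ - c)) - c) = c + ζ ^ (j + u) * (z₀ - c) := by
      rw [pow_add]; ring
    rw [e]
  -- the m points w (t*v) are in S
  have hwS0 : ∀ t : ℕ, c + ζ ^ (t * v) * (z₀ - c) ∈ S := by
    intro t
    induction t with
    | zero =>
        have e : c + ζ ^ (0 * v) * (z₀ - c) = z₀ := by rw [zero_mul, pow_zero]; ring
        rw [e]; exact hz₀
    | succ n ih =>
        have e : (n + 1) * v = n * v + v := by ring
        rw [e]
        exact (hwS (n * v)).1 ih
  have hTsub : T ⊆ S := by rw [hT]; exact Finset.sdiff_subset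
  -- existence of a T-point on the big orbit
  have hOcard' : O.card ≤ m' := by
    rw [hO]
    exact le_trans Finset.card_image_le (by simp)
  have hj₁ : ∃ j₁ : ℕ, c + ζ ^ j₁ * (z₀ - c) ∈ T := by
    by_contra hcon
    push_neg at hcon
    have hsub : (Finset.range m).image (fun t => c + ζ ^ (t * v) * (z₀ - c)) ⊆ O := by
      intro z hz
      obtain ⟨t, _, rfl⟩ := Finset.mem_image.1 hz
      by_contra hzO
      exact hcon (t * v) (hT ▸ Finset.mem_sdiff.2 ⟨hwS0 t, hzO⟩)
    have hvpos : 0 < v := by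
      rcases Nat.eq_zero_or_pos v with h | h
      · rw [h] at hvm; omega
      · exact h
    have hinj : Set.InjOn (fun t => c + ζ ^ (t * v) * (z₀ - c)) (Finset.range m) := by
      intro a ha b hb hab
      have h1 := hptinj _ _ hab
      have ha' : a * v < l := by
        have : a < m := Finset.mem_range.1 (by exact_mod_cast ha)
        calc a * v < m * v := by exact (Nat.mul_lt_mul_right hvpos).2 this
        _ = l := by rw [mul_comm]; exact hvm
      have hb' : b * v < l := by
        have : b < m := Finset.mem_range.1 (by exact_mod_cast hb)
        calc b * v < m * v := by exact (Nat.mul_lt_mul_right hvpos).2 this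
        _ = l := by rw [mul_comm]; exact hvm
      rw [Nat.mod_eq_of_lt ha', Nat.mod_eq_of_lt hb'] at h1
      exact Nat.eq_of_mul_eq_mul_right hvpos h1
    have hcard := Finset.card_le_card hsub
    rw [Finset.card_image_of_injOn hinj, Finset.card_range] at hcard
    omega
  obtain ⟨j₁, hj₁⟩ := hj₁
  -- reachability
  have hTB : ∀ b : ℕ, c + ζ ^ (j₁ + b * u) * (z₀ - c) ∈ T := by
    intro b
    induction b with
    | zero => simpa using hj₁
    | succ n ih =>
        have e : j₁ + (n + 1) * u = (j₁ + n * u) + u := by ring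
        rw [e]
        exact (hwT (j₁ + n * u)).1 ih
  have hSab : ∀ a b : ℕ, c + ζ ^ (j₁ + b * u + a * v) * (z₀ - c) ∈ S := by
    intro a b
    induction a with
    | zero => simpa using hTsub (hTB b)
    | succ n ih =>
        have e : j₁ + b * u + (n + 1) * v = (j₁ + b * u + n * v) + v := by ring
        rw [e]
        exact (hwS (j₁ + b * u + n * v)).1 ih
  -- coprimality of u and v
  have hcop : Nat.Coprime u v := by
    set d := Nat.gcd k m with hd
    have hdpos : 0 < d := Nat.gcd_pos_of_pos_left m hkpos
    have hdk : d ∣ k := Nat.gcd_dvd_left k m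
    have hdm : d ∣ m := Nat.gcd_dvd_right k m
    have hdl : d * l = k * m := by rw [hl]; exact Nat.gcd_mul_lcm k m
    have hukd : u = m / d := by
      have h1 : k * (m / d) * d = k * m := by
        rw [mul_assoc, Nat.div_mul_cancel hdm]
      have h2 : l = k * (m / d) := by
        have := hdl
        have h3 : d * l = d * (k * (m / d)) := by
          rw [this]; rw [← h1]; ring
        exact Nat.eq_of_mul_eq_mul_left hdpos h3
      rw [hu, h2, Nat.mul_div_cancel_left _ hkpos]
    have hvkd : v = k / d := by
      have h1 : m * (k / d) * d = k * m := by
        rw [mul_assoc, Nat.div_mul_cancel hdk]; ring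
      have h2 : l = m * (k / d) := by
        have h3 : d * l = d * (m * (k / d)) := by
          rw [hdl]; rw [← h1]; ring
        exact Nat.eq_of_mul_eq_mul_left hdpos h3
      rw [hv, h2, Nat.mul_div_cancel_left _ hmpos]
    rw [hukd, hvkd]
    exact (Nat.coprime_div_gcd_div_gcd hdpos).symm
  -- every point of the big orbit is in S
  have hIC : IsCoprime (u : ℤ) (v : ℤ) := by
    rw [Int.isCoprime_iff_gcd_eq_one]
    simpa [Int.gcd] using hcop
  obtain ⟨x, y, hxy⟩ := hIC
  have hxy' : (x : ZMod l) * (u : ZMod l) + (y : ZMod l) * (v : ZMod l) = 1 := by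
    have := congrArg (fun z : ℤ => (z : ZMod l)) hxy
    push_cast at this
    exact this
  have hkey : ∀ j : ℕ, ∃ a b : ℕ, (j₁ + b * u + a * v) % l = j % l := by
    intro j
    set t : ZMod l := (j : ZMod l) - (j₁ : ZMod l) with ht
    refine ⟨(t * (y : ZMod l)).val, (t * (x : ZMod l)).val, ?_⟩
    have hb : (((t * (x : ZMod l)).val : ℕ) : ZMod l) = t * (x : ZMod l) :=
      ZMod.natCast_rightInverse (t * (x : ZMod l))
    have ha : (((t * (y : ZMod l)).val : ℕ) : ZMod l) = t * (y : ZMod l) :=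
      ZMod.natCast_rightInverse (t * (y : ZMod l))
    have hcast : ((j₁ + (t * (x : ZMod l)).val * u + (t * (y : ZMod l)).val * v : ℕ) : ZMod l)
        = (j : ZMod l) := by
      push_cast
      rw [hb, ha]
      have : t = (j : ZMod l) - (j₁ : ZMod l) := ht
      linear_combination t * hxy' + this * (1 : ZMod l)
    exact (ZMod.natCast_eq_natCast_iff _ _ _).1 hcast
  have hall : ∀ j : ℕ, c + ζ ^ j * (z₀ - c) ∈ S := by
    intro j
    obtain ⟨a, b, hab⟩ := hkey j
    have h := hSab a b
    rwa [hwper _ _ hab] at h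
  -- O is closed under adding u
  have hOstep : ∀ j : ℕ, c + ζ ^ j * (z₀ - c) ∈ O → c + ζ ^ (j + u) * (z₀ - c) ∈ O := by
    intro j hjO
    by_contra hcon
    have hjT' : c + ζ ^ (j + u) * (z₀ - c) ∈ T :=
      hT ▸ Finset.mem_sdiff.2 ⟨hall (j + u), hcon⟩
    have hjT : c + ζ ^ j * (z₀ - c) ∈ T := (hwT j).2 hjT'
    rw [hT, Finset.mem_sdiff] at hjT
    exact hjT.2 hjO
  -- z₀ ∈ O
  have hz₀O : c + ζ ^ 0 * (z₀ - c) ∈ O := by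
    rw [hOmem]
    exact ⟨0, hm'pos, by rw [mul_zero]⟩
  have huO : c + ζ ^ (0 + u) * (z₀ - c) ∈ O := hOstep 0 hz₀O
  obtain ⟨i, hi, hieq⟩ := (hOmem _).1 huO
  have hmod : (0 + u) % l = ((l / m') * i) % l := hptinj _ _ hieq
  rw [zero_add] at hmod
  -- (l/m') divides u
  have hdvd1 : (l / m') ∣ l := ⟨m', hw'm'.symm⟩
  have hdvd2 : (l / m') ∣ ((l / m') * i) % l := (Nat.dvd_mod_iff hdvd1).2 ⟨i, rfl⟩
  have hdvd3 : (l / m') ∣ u % l := hmod ▸ hdvd2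
  have hdvd : (l / m') ∣ u := by
    have h4 : (l / m') ∣ l * (u / l) := Dvd.dvd.mul_right hdvd1 _
    have h5 : u = u % l + l * (u / l) := (Nat.mod_add_div u l).symm
    rw [h5]
    exact Nat.dvd_add hdvd3 h4
  obtain ⟨s, hs⟩ := hdvd
  -- conclude k ∣ m'
  have hm'pos' : 0 < l / m' := by
    rcases Nat.eq_zero_or_pos (l / m') with h | h
    · rw [h] at hw'm'; omega
    · exact h
  have hkm' : k ∣ m' := by
    have h1 : (l / m') * (s * k) = (l / m') * m' := by
      rw [← mul_assoc, ← hs, huk, hw'm']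
    have h2 : s * k = m' := Nat.eq_of_mul_eq_mul_left hm'pos' h1
    exact Dvd.intro_left s h2
  exact hkm'.trans hm'
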